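/- For all 0 < a < 1 and τ > max{3, 1/(1−a)} there exists δ ≥ 0 depending only on a and τ such that for every metric space Z and every choice of hyperbolic filling data for Z with parameters a, τ, the graph on the vertex set V is connected and its graph metric satisfies the hyperbolicity inequality: for all vertices o, x, y, z, (x|z)_o ≥ min{(x|y)_o, (y|z)_o} − δ, where (x|y)_o = (|xo| + |yo| − |xy|)/2 is the Gromov product formed with graph distances. -/

import Mathlib

open Filter

/-- Hyperbolic filling data for a metric space `Z` with parameter `a`: a choice, for
each `n : ℤ`, of a maximal `a^n`-separated subset `S n` of `Z`. -/
structure HypFilling (Z : Type*) [MetricSpace Z] (a : ℝ) where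
  S : ℤ → Set Z
  separated : ∀ n : ℤ, ∀ x ∈ S n, ∀ y ∈ S n, x ≠ y → a ^ n ≤ dist x y
  maximal : ∀ (n : ℤ) (z : Z), ∃ x ∈ S n, dist z x < a ^ n

namespace HypFilling

variable {Z : Type*} [MetricSpace Z] {a : ℝ}

/-- The vertex set of the hyperbolic filling. -/
def Vertex (F : HypFilling Z a) : Type _ := {p : Z × ℤ // p.1 ∈ F.S p.2}

/-- The height of a vertex. -/
def height {F : HypFilling Z a} (v : F.Vertex) : ℤ := v.1.2

/-- The underlying point in `Z` of a vertex. -/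
def pt {F : HypFilling Z a} (v : F.Vertex) : Z := v.1.1

/-- Adjacency in the hyperbolic filling graph with dilation parameter `τ`: distinct
vertices of heights differing by at most `1` whose associated dilated balls meet. -/
def Adj {F : HypFilling Z a} (τ : ℝ) (v w : F.Vertex) : Prop :=
  v ≠ w ∧ |height v - height w| ≤ 1 ∧
    ∃ z : Z, dist z (pt v) < τ * a ^ height v ∧ dist z (pt w) < τ * a ^ height w

/-- `f 0, f 1, …, f k` is a walk in the filling graph. -/
def IsWalk {F : HypFilling Z a} (τ : ℝ) (k : ℕ) (f : ℕ → F.Vertex) : Prop :=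
  ∀ i < k, Adj τ (f i) (f (i + 1))

/-- Two vertices are joined by a walk. -/
def Joined {F : HypFilling Z a} (τ : ℝ) (v w : F.Vertex) : Prop :=
  ∃ (k : ℕ) (f : ℕ → F.Vertex), f 0 = v ∧ f k = w ∧ IsWalk τ k f

/-- The graph distance: the minimal number of edges of a walk joining `v` to `w`. -/
noncomputable def graphDist {F : HypFilling Z a} (τ : ℝ) (v w : F.Vertex) : ℕ :=
  sInf {k : ℕ | ∃ f : ℕ → F.Vertex, f 0 = v ∧ f k = w ∧ IsWalk τ k f}

/-- The Gromov product `(v|w)_h` formed with heights and graph distances. -/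
noncomputable def gpH {F : HypFilling Z a} (τ : ℝ) (v w : F.Vertex) : ℝ :=
  ((height v : ℝ) + (height w : ℝ) - (graphDist τ v w : ℝ)) / 2

/-- An ascending vertical walk from `u` to `v`. -/
def VertWalkUp {F : HypFilling Z a} (τ : ℝ) (u v : F.Vertex) : Prop :=
  ∃ (k : ℕ) (f : ℕ → F.Vertex), f 0 = u ∧ f k = v ∧
    ∀ i < k, Adj τ (f i) (f (i + 1)) ∧ height (f (i + 1)) = height (f i) + 1

/-- A cone point for the pair `{v, w}`: a vertex joined to each of `v` and `w` by a
vertical walk, of height at most `min (height v) (height w)`. -/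
def ConePoint {F : HypFilling Z a} (τ : ℝ) (u v w : F.Vertex) : Prop :=
  VertWalkUp τ u v ∧ VertWalkUp τ u w ∧ height u ≤ min (height v) (height w)

/-- A branch point for the pair `{v, w}`: a cone point of maximal height. -/
def BranchPoint {F : HypFilling Z a} (τ : ℝ) (u v w : F.Vertex) : Prop :=
  ConePoint τ u v w ∧ ∀ u' : F.Vertex, ConePoint τ u' v w → height u' ≤ height u

end HypFilling

/-- The Gromov product `(x|y)_o` formed with graph distances in the filling graph. -/
noncomputable def HypFilling.gpGraph {Z : Type*} [MetricSpace Z] {a : ℝ}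
    {F : HypFilling Z a} (τ : ℝ) (o x y : F.Vertex) : ℝ :=
  ((HypFilling.graphDist τ x o : ℝ) + (HypFilling.graphDist τ y o : ℝ) -
    (HypFilling.graphDist τ x y : ℝ)) / 2

/-!
Up to an additive constant depending only on `a` and `τ`, the graph distance is
`|v w| = h v + h w - 2 ρ(v, w)` with `ρ(v, w) = log_a max(d(v, w), a ^ min(h v, h w))`, the
height of a branch point of `v` and `w`. The upper bound comes from descending from `v` and `w`
to level `⌊ρ⌋` and joining the two feet by one edge; the lower bound from the fact that a walk
of length `k` from `v` to `w` moves `pt v` by at most a constant times `a ^ ((h v + h w - k) / 2)`.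
Since `d(x, z) ≤ 2 max(d(x, y), d(y, z))`, `ρ` is an ultrametric up to `log_a 2`, hence satisfies
the four-point condition up to a constant, and this passes to the Gromov products of `|·|`.
-/

open Real

section AlmostUltrametric

variable {α : Type*} {ρ : α → α → ℝ} {c : ℝ}

theorem min_add_le_add_of_almost_ultrametric (hρ_comm : ∀ x y, ρ x y = ρ y x)
    (hρ : ∀ x y z, min (ρ x y) (ρ y z) - c ≤ ρ x z) (o x y z : α) :
    min (ρ x y + ρ z o) (ρ y z + ρ x o) ≤ ρ x z + ρ y o + 2 * c := by
  have hxyz := min_le_iff.1 (sub_le_iff_le_add.1 (hρ x y z))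
  have hxoz := min_le_iff.1 (sub_le_iff_le_add.1 (hρ x o z))
  have hyxo := min_le_iff.1 (sub_le_iff_le_add.1 (hρ y x o))
  have hyzo := min_le_iff.1 (sub_le_iff_le_add.1 (hρ y z o))
  rw [hρ_comm o z] at hxoz
  rw [hρ_comm y x] at hyxo
  have := min_le_left (ρ x y + ρ z o) (ρ y z + ρ x o)
  have := min_le_right (ρ x y + ρ z o) (ρ y z + ρ x o)
  rcases hxyz with _ | _ <;> rcases hxoz with _ | _ <;> rcases hyxo with _ | _ <;>
    rcases hyzo with _ | _ <;> linarith

/-- If `d x y = h x + h y - 2 ρ x y` up to `K`, the Gromov products of `d` are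
`h o - ρ x o - ρ y o + ρ x y` up to `3 K / 2`, and for these the four-point condition of `ρ` is
exactly the hyperbolicity inequality. -/
theorem gromov_product_ge_min_sub_of_almost_ultrametric {d : α → α → ℝ} {h : α → ℝ}
    {K : ℝ} (hρ_comm : ∀ x y, ρ x y = ρ y x) (hρ : ∀ x y z, min (ρ x y) (ρ y z) - c ≤ ρ x z)
    (hd : ∀ x y, |d x y - (h x + h y - 2 * ρ x y)| ≤ K) (o x y z : α) :
    min ((d x o + d y o - d x y) / 2) ((d y o + d z o - d y z) / 2) - (2 * c + 3 * K) ≤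
      (d x o + d z o - d x z) / 2 := by
  have h4 := min_le_iff.1 (min_add_le_add_of_almost_ultrametric hρ_comm hρ o x y z)
  have := abs_le.1 (hd x o)
  have := abs_le.1 (hd y o)
  have := abs_le.1 (hd z o)
  have := abs_le.1 (hd x y)
  have := abs_le.1 (hd y z)
  have := abs_le.1 (hd x z)
  rw [sub_le_iff_le_add, min_le_iff]
  rcases h4 with h4 | h4
  · left; linarith
  · right; linarith

end AlmostUltrametric

namespace HypFilling

variable {Z : Type*} [MetricSpace Z] {a τ : ℝ} {F : HypFilling Z a}

theorem Adj.symm {v w : F.Vertex} (h : Adj τ v w) : Adj τ w v :=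
  ⟨h.1.symm, by rw [abs_sub_comm]; exact h.2.1, let ⟨z, hz⟩ := h.2.2; ⟨z, hz.symm⟩⟩

def graph (F : HypFilling Z a) (τ : ℝ) : SimpleGraph F.Vertex where
  Adj := Adj τ
  symm := ⟨fun _ _ => Adj.symm⟩
  loopless := ⟨fun _ h => h.1 rfl⟩

theorem graph_adj {v w : F.Vertex} : (F.graph τ).Adj v w ↔ Adj τ v w := Iff.rfl

theorem exists_walk_of_isWalk {k : ℕ} {f : ℕ → F.Vertex} (hf : IsWalk τ k f) :
    ∃ p : (F.graph τ).Walk (f 0) (f k), p.length = k := by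
  induction k with
  | zero => exact ⟨.nil, rfl⟩
  | succ k ih =>
    obtain ⟨p, hp⟩ := ih fun i hi => hf i (by omega)
    exact ⟨p.concat (graph_adj.2 (hf k k.lt_succ_self)),
      by rw [SimpleGraph.Walk.length_concat, hp]⟩

theorem exists_isWalk_iff_exists_walk {v w : F.Vertex} {k : ℕ} :
    (∃ f : ℕ → F.Vertex, f 0 = v ∧ f k = w ∧ IsWalk τ k f) ↔
      ∃ p : (F.graph τ).Walk v w, p.length = k := by
  constructor
  · rintro ⟨f, rfl, rfl, hf⟩
    exact exists_walk_of_isWalk hf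
  · rintro ⟨p, rfl⟩
    exact ⟨p.getVert, p.getVert_zero, p.getVert_length,
      fun i hi => graph_adj.1 (p.adj_getVert_succ hi)⟩

theorem joined_iff_reachable {v w : F.Vertex} : Joined τ v w ↔ (F.graph τ).Reachable v w := by
  simp only [Joined, exists_isWalk_iff_exists_walk, SimpleGraph.Reachable]
  exact ⟨fun ⟨_, p, _⟩ => ⟨p⟩, fun ⟨p⟩ => ⟨_, p, rfl⟩⟩

theorem graphDist_eq_dist (v w : F.Vertex) : graphDist τ v w = (F.graph τ).dist v w := by
  rw [SimpleGraph.dist_eq_sInf, graphDist]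
  congr 1
  ext k
  simp only [Set.mem_ofPred_eq, exists_isWalk_iff_exists_walk, Set.mem_range]

noncomputable def nearVertex (F : HypFilling Z a) (z : Z) (n : ℤ) : F.Vertex :=
  ⟨((F.maximal n z).choose, n), (F.maximal n z).choose_spec.1⟩

theorem height_nearVertex (z : Z) (n : ℤ) : height (F.nearVertex z n) = n := rfl

theorem dist_nearVertex_lt (z : Z) (n : ℤ) : dist z (pt (F.nearVertex z n)) < a ^ n :=
  (F.maximal n z).choose_spec.2

theorem nearVertex_pt_height (v : F.Vertex) : F.nearVertex (pt v) (height v) = v := by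
  have hpt : pt (F.nearVertex (pt v) (height v)) = pt v := by
    by_contra hne
    have hlt := dist_nearVertex_lt (F := F) (pt v) (height v)
    exact (F.separated _ _ v.2 _ (F.maximal _ _).choose_spec.1 (Ne.symm hne)).not_gt hlt
  exact Subtype.ext (Prod.ext hpt rfl)

theorem adj_nearVertex_succ (ha : 0 < a) (hτ : 1 < τ) (z : Z) (n : ℤ) :
    (F.graph τ).Adj (F.nearVertex z (n + 1)) (F.nearVertex z n) := by
  refine ⟨fun h => by simpa [height_nearVertex] using congrArg height h,
    by simp [height_nearVertex], z, ?_, ?_⟩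
  all_goals exact (dist_nearVertex_lt z _).trans (lt_mul_of_one_lt_left (zpow_pos ha _) hτ)

theorem edist_nearVertex_le (ha : 0 < a) (hτ : 1 < τ) (z : Z) (n : ℤ) (k : ℕ) :
    (F.graph τ).edist (F.nearVertex z (n + k)) (F.nearVertex z n) ≤ k := by
  induction k with
  | zero => simp
  | succ k ih =>
    have hstep :
        (F.graph τ).edist (F.nearVertex z (n + (k + 1 : ℕ))) (F.nearVertex z (n + k)) ≤ 1 := by
      rw [SimpleGraph.edist_le_one_iff_adj_or_eq, Nat.cast_succ, ← add_assoc]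
      exact Or.inl (adj_nearVertex_succ ha hτ z _)
    calc _ ≤ _ := SimpleGraph.edist_triangle
      _ ≤ 1 + k := add_le_add hstep ih
      _ = (k + 1 : ℕ) := by push_cast; ring

theorem edist_nearVertex_le_of_add_eq (ha : 0 < a) (hτ : 1 < τ) {v : F.Vertex} {m : ℤ} {k : ℕ}
    (hv : m + k = height v) : (F.graph τ).edist v (F.nearVertex (pt v) m) ≤ k := by
  have := edist_nearVertex_le (F := F) ha hτ (pt v) m k
  rwa [hv, nearVertex_pt_height] at this

theorem edist_le_of_dist_le_zpow (ha : 0 < a) (hτ : 2 < τ) {v w : F.Vertex} {m : ℤ} {k l : ℕ}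
    (hv : m + k = height v) (hw : m + l = height w) (hd : dist (pt v) (pt w) ≤ a ^ m) :
    (F.graph τ).edist v w ≤ k + 1 + l := by
  set v' := F.nearVertex (pt v) m
  set w' := F.nearVertex (pt w) m
  have hτ1 : 1 < τ := one_lt_two.trans hτ
  have hvv' : (F.graph τ).edist v v' ≤ k := edist_nearVertex_le_of_add_eq ha hτ1 hv
  have hw'w : (F.graph τ).edist w' w ≤ l :=
    SimpleGraph.edist_comm.trans_le (edist_nearVertex_le_of_add_eq ha hτ1 hw)
  have hv'w' : (F.graph τ).edist v' w' ≤ 1 := by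
    rw [SimpleGraph.edist_le_one_iff_adj_or_eq, or_iff_not_imp_right]
    intro hne
    have ham := zpow_pos ha m
    refine ⟨hne, by simp [v', w', height_nearVertex], pt v, ?_, ?_⟩
    · exact (dist_nearVertex_lt _ _).trans (by simp only [v', height_nearVertex]; nlinarith)
    · calc dist (pt v) (pt w') ≤ dist (pt v) (pt w) + dist (pt w) (pt w') := dist_triangle _ _ _
        _ < a ^ m + a ^ m := add_lt_add_of_le_of_lt hd (dist_nearVertex_lt _ _)
        _ < τ * a ^ height w' := by simp only [w', height_nearVertex]; nlinarith
  calc (F.graph τ).edist v w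
      ≤ (F.graph τ).edist v v' + (F.graph τ).edist v' w' + (F.graph τ).edist w' w :=
        SimpleGraph.edist_triangle.trans (add_le_add SimpleGraph.edist_triangle le_rfl)
    _ ≤ k + 1 + l := add_le_add (add_le_add hvv' hv'w') hw'w

/-- The term `a ^ min (height v) (height w)` keeps the scale positive when `pt v = pt w` and
caps `branchHeight` by the heights. -/
noncomputable def scale (v w : F.Vertex) : ℝ :=
  max (dist (pt v) (pt w)) (a ^ min (height v) (height w))

noncomputable def branchHeight (v w : F.Vertex) : ℝ :=
  logb a (scale v w)

theorem scale_pos (ha : 0 < a) (v w : F.Vertex) : 0 < scale v w :=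
  (zpow_pos ha _).trans_le (le_max_right _ _)

theorem scale_comm (v w : F.Vertex) : scale v w = scale w v := by
  rw [scale, scale, dist_comm, min_comm]

theorem branchHeight_comm (v w : F.Vertex) : branchHeight v w = branchHeight w v := by
  rw [branchHeight, branchHeight, scale_comm]

theorem scale_le_two_mul_max (ha0 : 0 < a) (ha1 : a < 1) (x y z : F.Vertex) :
    scale x z ≤ 2 * max (scale x y) (scale y z) := by
  have hM : 0 ≤ max (scale x y) (scale y z) := (scale_pos ha0 x y).le.trans (le_max_left _ _)
  refine max_le ?_ ?_
  · calc dist (pt x) (pt z) ≤ dist (pt x) (pt y) + dist (pt y) (pt z) := dist_triangle _ _ _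
      _ ≤ max (scale x y) (scale y z) + max (scale x y) (scale y z) :=
        add_le_add ((le_max_left _ _).trans (le_max_left _ _))
          ((le_max_left _ _).trans (le_max_right _ _))
      _ = 2 * max (scale x y) (scale y z) := by ring
  · have hmin : min (min (height x) (height y)) (min (height y) (height z)) ≤
        min (height x) (height z) := by omega
    calc a ^ min (height x) (height z)
        ≤ a ^ min (min (height x) (height y)) (min (height y) (height z)) :=
          zpow_le_zpow_right_of_le_one₀ ha0 ha1.le hmin
      _ ≤ max (scale x y) (scale y z) := by
          rcases min_choice (min (height x) (height y)) (min (height y) (height z)) with h | h <;>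
            rw [h]
          exacts [(le_max_right _ _).trans (le_max_left _ _),
            (le_max_right _ _).trans (le_max_right _ _)]
      _ ≤ 2 * max (scale x y) (scale y z) := by linarith

theorem min_branchHeight_add_logb_two_le (ha0 : 0 < a) (ha1 : a < 1) (x y z : F.Vertex) :
    min (branchHeight x y) (branchHeight y z) + logb a 2 ≤ branchHeight x z := by
  have hM : 0 < max (scale x y) (scale y z) := (scale_pos ha0 x y).trans_le (le_max_left _ _)
  calc min (branchHeight x y) (branchHeight y z) + logb a 2
      ≤ logb a (max (scale x y) (scale y z)) + logb a 2 := by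
        rcases max_choice (scale x y) (scale y z) with h | h <;> rw [h]
        exacts [add_le_add_left (min_le_left _ _) _, add_le_add_left (min_le_right _ _) _]
    _ = logb a (2 * max (scale x y) (scale y z)) := by
        rw [logb_mul two_ne_zero hM.ne', add_comm]
    _ ≤ branchHeight x z :=
        (logb_le_logb_of_base_lt_one ha0 ha1 (by positivity) (scale_pos ha0 x z)).2
          (scale_le_two_mul_max ha0 ha1 x y z)

theorem branchHeight_le_min (ha0 : 0 < a) (ha1 : a < 1) (v w : F.Vertex) :
    branchHeight v w ≤ min (height v : ℝ) (height w) := by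
  calc branchHeight v w ≤ logb a (a ^ min (height v) (height w)) :=
        (logb_le_logb_of_base_lt_one ha0 ha1 (scale_pos ha0 v w) (zpow_pos ha0 _)).2
          (le_max_right _ _)
    _ = min (height v : ℝ) (height w) := by
        rw [← rpow_intCast, logb_rpow ha0 ha1.ne, Int.cast_min]

theorem dist_le_rpow_branchHeight (ha0 : 0 < a) (ha1 : a < 1) (v w : F.Vertex) :
    dist (pt v) (pt w) ≤ a ^ branchHeight v w := by
  rw [branchHeight, rpow_logb ha0 ha1.ne (scale_pos ha0 v w)]
  exact le_max_left _ _

theorem reachable_and_dist_le (ha0 : 0 < a) (ha1 : a < 1) (hτ : 2 < τ) (v w : F.Vertex) :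
    (F.graph τ).Reachable v w ∧
      ((F.graph τ).dist v w : ℝ) ≤ height v + height w - 2 * branchHeight v w + 3 := by
  set m := ⌊branchHeight v w⌋
  obtain ⟨hρv, hρw⟩ := le_min_iff.1 (branchHeight_le_min ha0 ha1 v w)
  obtain ⟨k, hk⟩ := Int.le.dest (Int.floor_le_iff.2 (by linarith) : m ≤ height v)
  obtain ⟨l, hl⟩ := Int.le.dest (Int.floor_le_iff.2 (by linarith) : m ≤ height w)
  have hd : dist (pt v) (pt w) ≤ a ^ m := by
    rw [← rpow_intCast]
    exact (dist_le_rpow_branchHeight ha0 ha1 v w).trans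
      (rpow_le_rpow_of_exponent_ge ha0 ha1.le (Int.floor_le _))
  have he := edist_le_of_dist_le_zpow ha0 hτ hk hl hd
  have hr : (F.graph τ).Reachable v w :=
    SimpleGraph.reachable_of_edist_ne_top (he.trans_lt (by simp)).ne
  refine ⟨hr, ?_⟩
  have hdist : (F.graph τ).dist v w ≤ k + 1 + l := by
    rw [← hr.coe_dist_eq_edist] at he
    exact_mod_cast he
  have hkl : ((k + 1 + l : ℕ) : ℝ) = height v + height w - 2 * m + 1 := by
    rw [← hk, ← hl]; push_cast; ring
  have hfloor := Int.sub_one_lt_floor (branchHeight v w)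
  have := (Nat.cast_le (α := ℝ)).2 hdist
  linarith
theorem height_eq_of_adj {u v : F.Vertex} (h : (F.graph τ).Adj u v) :
    height v = height u + 1 ∨ height v = height u ∨ height v = height u - 1 := by
  have := abs_le.1 (graph_adj.1 h).2.1
  omega

theorem dist_pt_le_of_adj {u v : F.Vertex} (h : (F.graph τ).Adj u v) :
    dist (pt u) (pt v) ≤ τ * a ^ height u + τ * a ^ height v := by
  obtain ⟨z, hzu, hzv⟩ := (graph_adj.1 h).2.2
  linarith [dist_triangle_left (pt u) (pt v) z]

theorem abs_height_sub_le_length {v w : F.Vertex} (p : (F.graph τ).Walk v w) :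
    |height v - height w| ≤ p.length := by
  induction p with
  | nil => simp
  | @cons u v w h p ih =>
    rw [SimpleGraph.Walk.length_cons]
    push_cast
    linarith [abs_sub_le (height u) (height v) (height w), (graph_adj.1 h).2.1]

/-- Induction on the walk, adding edges at the front. The term `D * a ^ height v` pays for the
first edge: an upward step costs `τ (1 + a) a ^ height v ≤ D (1 - a) a ^ height v`, while a level
or downward step is paid by the growth of `q ^ e` as the exponent `e` drops. -/
theorem dist_add_le_of_walk (hτ : 0 ≤ τ) {q D : ℝ} (hq0 : 0 < q) (hq1 : q < 1)
    (hqa : q ^ 2 = a) (hD : D * (1 - a) = 2 * τ) {v w : F.Vertex} (p : (F.graph τ).Walk v w) :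
    dist (pt v) (pt w) + D * a ^ height v ≤ 4 * D * q ^ (height v + height w - p.length) := by
  have ha0 : 0 < a := hqa ▸ pow_pos hq0 2
  have ha1 : a < 1 := hqa ▸ pow_lt_one₀ hq0.le hq1 two_ne_zero
  have hD0 : 0 ≤ D := by nlinarith
  have hpow : ∀ n : ℤ, a ^ n = q ^ (2 * n) := fun n => by rw [zpow_mul, ← hqa]; norm_cast
  have hq2 : ∀ n : ℤ, q ^ (n + 2) = q ^ n * a := fun n => by
    rw [zpow_add₀ hq0.ne', ← hqa]; norm_cast
  induction p with
  | @nil u =>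
    have := zpow_pos ha0 (height u)
    rw [dist_self, SimpleGraph.Walk.length_nil, Nat.cast_zero, sub_zero, ← two_mul, ← hpow]
    nlinarith
  | @cons u v' w hadj p ih =>
    rw [SimpleGraph.Walk.length_cons, Nat.cast_succ]
    obtain ⟨e, he⟩ : ∃ e : ℤ, height u + height w - ((p.length : ℤ) + 1) = e :=
      ⟨_, rfl⟩
    rw [he]
    have hP : 0 < q ^ e := zpow_pos hq0 e
    have hBP : a ^ height u ≤ q ^ e := by
      have := abs_le.1 (abs_height_sub_le_length p)
      rw [hpow]
      rcases height_eq_of_adj hadj with h | h | h <;>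
        exact zpow_le_zpow_right_of_le_one₀ hq0 hq1.le (by omega)
    have hedge : dist (pt u) (pt w) ≤
        τ * a ^ height u + τ * a ^ height v' + dist (pt v') (pt w) := by
      linarith [dist_triangle (pt u) (pt v') (pt w), dist_pt_le_of_adj hadj]
    rcases height_eq_of_adj hadj with hv' | hv' | hv'
    · rw [show height v' + height w - (p.length : ℤ) = e + 2 by omega, hq2,
        hv', zpow_add_one₀ ha0.ne'] at ih
      rw [hv', zpow_add_one₀ ha0.ne'] at hedge
      nlinarith [mul_le_mul_of_nonneg_left hBP hτ, mul_nonneg hτ (zpow_pos ha0 (height u)).le]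
    · rw [show height v' + height w - (p.length : ℤ) = e + 1 by omega, zpow_add_one₀ hq0.ne',
        hv'] at ih
      rw [hv'] at hedge
      have hτq : 2 * τ ≤ 4 * D * (1 - q) := by nlinarith
      nlinarith [mul_le_mul_of_nonneg_left hBP hτ, mul_le_mul_of_nonneg_right hτq hP.le]
    · rw [show height v' + height w - (p.length : ℤ) = e by omega] at ih
      have hB : a ^ height u = a ^ height v' * a := by
        rw [← zpow_add_one₀ ha0.ne', hv', sub_add_cancel]
      rw [hB] at hedge ⊢
      have hB' := zpow_pos ha0 (height v')
      nlinarith [mul_nonneg (mul_nonneg hτ hB'.le) (sub_nonneg.2 ha1.le)]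

theorem one_le_eight_mul_div (ha0 : 0 < a) (ha1 : a < 1) (hτ : 1 < τ) : 1 ≤ 8 * τ / (1 - a) := by
  rw [le_div_iff₀ (by linarith)]
  linarith

theorem le_dist_of_reachable (ha0 : 0 < a) (ha1 : a < 1) (hτ : 1 < τ) {v w : F.Vertex}
    (h : (F.graph τ).Reachable v w) :
    height v + height w - 2 * branchHeight v w + 2 * logb a (8 * τ / (1 - a)) ≤
      (F.graph τ).dist v w := by
  obtain ⟨p, hp⟩ := h.exists_walk_length_eq_dist
  have h1a : 0 < 1 - a := by linarith
  have hC := one_le_eight_mul_div ha0 ha1 hτ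
  have hq0 : 0 < √a := sqrt_pos.2 ha0
  have hq1 : √a < 1 := (sqrt_lt' one_pos).2 (by rwa [one_pow])
  have hqa : √a ^ 2 = a := sq_sqrt ha0.le
  have hwalk := dist_add_le_of_walk (by linarith) hq0 hq1 hqa
    (div_mul_cancel₀ (2 * τ) h1a.ne') p
  set e : ℤ := height v + height w - p.length
  have hqe : √a ^ e = a ^ ((e : ℝ) / 2) := by
    rw [sqrt_eq_rpow, ← rpow_intCast, ← rpow_mul ha0.le]; ring_nf
  have hscale : scale v w ≤ 8 * τ / (1 - a) * √a ^ e := by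
    have hP := zpow_pos hq0 e
    refine max_le ?_ ?_
    · have := mul_nonneg (div_nonneg (by linarith : 0 ≤ 2 * τ) h1a.le)
        (zpow_pos ha0 (height v)).le
      rw [show 4 * (2 * τ / (1 - a)) = 8 * τ / (1 - a) by ring] at hwalk
      linarith
    · have := abs_le.1 (abs_height_sub_le_length p)
      calc a ^ min (height v) (height w) = √a ^ (2 * min (height v) (height w)) := by
            rw [zpow_mul, (by norm_cast : √a ^ (2 : ℤ) = √a ^ 2), hqa]
        _ ≤ √a ^ e := zpow_le_zpow_right_of_le_one₀ hq0 hq1.le (by omega)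
        _ ≤ 8 * τ / (1 - a) * √a ^ e := le_mul_of_one_le_left hP.le hC
  have hρ : logb a (8 * τ / (1 - a)) + e / 2 ≤ branchHeight v w := by
    refine (le_logb_iff_rpow_le_of_base_lt_one ha0 ha1 (scale_pos ha0 v w)).2 ?_
    rwa [rpow_add ha0, rpow_logb ha0 ha1.ne (by linarith), ← hqe]
  rw [← hp]
  push_cast [e] at hρ
  linarith

theorem abs_graphDist_sub_le (ha0 : 0 < a) (ha1 : a < 1) (hτ : 2 < τ) (v w : F.Vertex) :
    |(graphDist τ v w : ℝ) - (height v + height w - 2 * branchHeight v w)| ≤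
      3 - 2 * logb a (8 * τ / (1 - a)) := by
  obtain ⟨hr, hupper⟩ := reachable_and_dist_le ha0 ha1 hτ v w
  have hlower := le_dist_of_reachable ha0 ha1 (one_lt_two.trans hτ) hr
  have hC := one_le_eight_mul_div ha0 ha1 (one_lt_two.trans hτ)
  have hlogC := (logb_nonpos_iff_of_base_lt_one ha0 ha1 (by linarith)).2 hC
  rw [graphDist_eq_dist]
  exact abs_le.2 ⟨by linarith, by linarith⟩

end HypFilling

/-- Theorem: the hyperbolic filling graph is connected and Gromov hyperbolic, with
hyperbolicity constant depending only on `a` and `τ`. -/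
theorem statement1 (a τ : ℝ) (ha0 : 0 < a) (ha1 : a < 1)
    (hτ : max 3 (1 / (1 - a)) < τ) :
    ∃ δ : ℝ, 0 ≤ δ ∧
      ∀ (Z : Type) [MetricSpace Z] (F : HypFilling Z a),
        (∀ v w : F.Vertex, HypFilling.Joined τ v w) ∧
        ∀ o x y z : F.Vertex,
          HypFilling.gpGraph τ o x z ≥
            min (HypFilling.gpGraph τ o x y) (HypFilling.gpGraph τ o y z) - δ := by
  have hτ2 : 2 < τ := by linarith [le_max_left 3 (1 / (1 - a))]
  have hC := HypFilling.one_le_eight_mul_div ha0 ha1 (one_lt_two.trans hτ2)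
  refine ⟨2 * -logb a 2 + 3 * (3 - 2 * logb a (8 * τ / (1 - a))), ?_,
    fun Z _ F => ⟨fun v w => ?_, fun o x y z => ?_⟩⟩
  · have h2 := (logb_nonpos_iff_of_base_lt_one ha0 ha1 two_pos).2 one_le_two
    have hlogC := (logb_nonpos_iff_of_base_lt_one ha0 ha1 (by linarith)).2 hC
    linarith
  · exact HypFilling.joined_iff_reachable.2 (HypFilling.reachable_and_dist_le ha0 ha1 hτ2 v w).1
  · exact gromov_product_ge_min_sub_of_almost_ultrametric HypFilling.branchHeight_comm
      (fun x y z => by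
        rw [sub_neg_eq_add]; exact HypFilling.min_branchHeight_add_logb_two_le ha0 ha1 x y z)
      (HypFilling.abs_graphDist_sub_le ha0 ha1 hτ2) o x y z
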